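/- Let H be a non-empty graph. If the vertex of K_1 does not belong to any local metric basis of the join K_1 + H, then for any connected graph G of order n, dim_l(G ⊙ H) = n·dim_l(K_1 + H). -/

import Mathlib

open SimpleGraph

/-- A set `S` is a local metric generator for `G` if every pair of adjacent
vertices is distinguished, by distance, by some element of `S`. -/
def IsLocalMetricGenerator {V : Type*} (G : SimpleGraph V) (S : Set V) : Prop :=
  ∀ ⦃u v : V⦄, G.Adj u v → ∃ w ∈ S, G.dist u w ≠ G.dist v w

/-- The local metric dimension of a graph. -/
noncomputable def localMetricDim {V : Type*} [Fintype V] (G : SimpleGraph V) : ℕ :=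
  sInf {k | ∃ S : Finset V, IsLocalMetricGenerator G ↑S ∧ S.card = k}

/-- A local metric basis: a local metric generator of minimum cardinality. -/
def IsLocalMetricBasis {V : Type*} [Fintype V] (G : SimpleGraph V) (S : Finset V) : Prop :=
  IsLocalMetricGenerator G ↑S ∧ S.card = localMetricDim G

/-- The join K₁ + H: a new vertex (`none`) adjacent to all vertices of H. -/
def oneJoin {W : Type*} (H : SimpleGraph W) : SimpleGraph (Option W) :=
  SimpleGraph.fromRel (fun a b => match a, b with
    | none, some _ => True
    | some x, some y => H.Adj x y
    | _, _ => False)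

/-- The corona product G ⊙ H: one copy of G and a copy of H for each vertex
i of G, with i joined to every vertex of its copy of H. -/
def corona {V W : Type*} (G : SimpleGraph V) (H : SimpleGraph W) :
    SimpleGraph (V ⊕ V × W) :=
  SimpleGraph.fromRel (fun a b => match a, b with
    | .inl u, .inl w => G.Adj u w
    | .inr p, .inr q => p.1 = q.1 ∧ H.Adj p.2 q.2
    | .inl u, .inr p => u = p.1
    | .inr _, .inl _ => False)

/-!
`G ⊙ H` is the union of `n` copies of `K₁ + H`, one over each vertex `u` of `G` (with `u` playing
the role of `K₁`), glued along `G`. Each copy is an induced subgraph of diameter at most two, so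
distances inside it are those of `K₁ + H`; and `u` separates its copy of `H` from the rest of the
graph, so all vertices of that copy of `H` are equidistant from any vertex outside the copy.

Hence a local metric generator of `G ⊙ H`, restricted to the copy over `u` and enlarged by `u`,
generates `K₁ + H`; as the `K₁` vertex lies in no basis, the restriction alone already has at
least `dim_l(K₁ + H)` elements, giving `n · dim_l(K₁ + H) ≤ dim_l(G ⊙ H)`. Conversely, the copies
of a basis `B` of `K₁ + H` generate `G ⊙ H`: edges inside a copy are resolved inside it, and an
edge `uv` of `G` is resolved by the copy over `u` of any vertex of `B`, which is a vertex of `H`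
at distance one from `u` and at distance at least two from `v`.
-/

namespace SimpleGraph

variable {V V' : Type*} {G : SimpleGraph V} {G' : SimpleGraph V'} {u v : V}

lemma Adj.dist_self_ne (h : G.Adj u v) : G.dist u u ≠ G.dist v u := by
  rw [dist_self, dist_eq_one_iff_adj.2 h.symm]
  exact zero_ne_one

lemma Reachable.dist_map_le (f : G →g G') (h : G.Reachable u v) :
    G'.dist (f u) (f v) ≤ G.dist u v := by
  obtain ⟨p, hp⟩ := h.exists_walk_length_eq_dist
  calc G'.dist (f u) (f v) ≤ (p.map f).length := dist_le _
    _ = G.dist u v := by rw [Walk.length_map, hp]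

/-- Distances at most two are determined by equality and adjacency alone. -/
lemma Embedding.dist_eq_of_dist_le_two (f : G ↪g G') (h : G.Reachable u v)
    (h2 : G.dist u v ≤ 2) : G'.dist (f u) (f v) = G.dist u v := by
  have hle : G'.dist (f u) (f v) ≤ G.dist u v := h.dist_map_le f.toHom
  interval_cases hd : G.dist u v
  · exact Nat.le_zero.1 hle
  · exact dist_eq_one_iff_adj.2 (f.map_adj_iff.2 (dist_eq_one_iff_adj.1 hd))
  · have hne : f u ≠ f v := f.injective.ne fun huv => by simp [huv] at hd
    have h0 : G'.dist (f u) (f v) ≠ 0 := fun h0 => hne ((h.map f.toHom).dist_eq_zero_iff.1 h0)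
    have h1 : G'.dist (f u) (f v) ≠ 1 := fun h1 => by
      rw [dist_eq_one_iff_adj, f.map_adj_iff, ← dist_eq_one_iff_adj, hd] at h1
      omega
    omega

end SimpleGraph

section LocalMetricDim

variable {V : Type*}

lemma isLocalMetricGenerator_univ (G : SimpleGraph V) : IsLocalMetricGenerator G Set.univ :=
  fun u _ h => ⟨u, trivial, h.dist_self_ne⟩

variable [Fintype V] {G : SimpleGraph V}

lemma exists_isLocalMetricBasis (G : SimpleGraph V) : ∃ B : Finset V, IsLocalMetricBasis G B := by
  have hne : {k | ∃ S : Finset V, IsLocalMetricGenerator G ↑S ∧ S.card = k}.Nonempty :=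
    ⟨_, Finset.univ, by simpa using isLocalMetricGenerator_univ G, rfl⟩
  obtain ⟨B, hB, hcard⟩ := Nat.sInf_mem hne
  exact ⟨B, hB, hcard⟩

lemma localMetricDim_le_card {S : Finset V} (h : IsLocalMetricGenerator G ↑S) :
    localMetricDim G ≤ S.card :=
  Nat.sInf_le ⟨S, h, rfl⟩

lemma le_localMetricDim {n : ℕ}
    (h : ∀ S : Finset V, IsLocalMetricGenerator G ↑S → n ≤ S.card) : n ≤ localMetricDim G := by
  obtain ⟨B, hB, hcard⟩ := exists_isLocalMetricBasis G
  exact hcard ▸ h B hB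

lemma IsLocalMetricGenerator.localMetricDim_lt_card {S : Finset V} {v : V}
    (hS : IsLocalMetricGenerator G ↑S) (hv : v ∈ S)
    (hbasis : ∀ B : Finset V, IsLocalMetricBasis G B → v ∉ B) : localMetricDim G < S.card :=
  (localMetricDim_le_card hS).lt_of_ne fun h => hbasis S ⟨hS, h.symm⟩ hv

end LocalMetricDim

lemma Finset.sum_card_preimage_le_card {ι α β : Type*} [Fintype ι] {f : ι → α → β}
    (hf : Function.Injective2 f) (S : Finset β) :
    ∑ i, (S.preimage (f i) (hf.right i).injOn).card ≤ S.card := by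
  rw [← Finset.card_sigma]
  refine Finset.card_le_card_of_injOn (fun x => f x.1 x.2) (fun x hx => ?_) ?_
  · simpa using hx
  · rintro ⟨i, a⟩ - ⟨j, b⟩ - h
    obtain ⟨rfl, rfl⟩ := hf h
    rfl

section CoronaProduct

open Sum

variable {V W : Type*} {G : SimpleGraph V} {H : SimpleGraph W}

@[simp] lemma oneJoin_adj_none_some (w : W) : (oneJoin H).Adj none (some w) := by
  simp [oneJoin]

@[simp] lemma oneJoin_adj_some_none (w : W) : (oneJoin H).Adj (some w) none := by
  simp [oneJoin]

@[simp] lemma oneJoin_adj_some_some {w w' : W} :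
    (oneJoin H).Adj (some w) (some w') ↔ H.Adj w w' := by
  simp only [oneJoin, fromRel_adj, ne_eq, Option.some.injEq, H.adj_comm w' w, or_self,
    and_iff_right_iff_imp]
  exact Adj.ne

lemma oneJoin_dist_none_le_one (a : Option W) : (oneJoin H).dist none a ≤ 1 := by
  rcases a with _ | w
  · simp
  · exact (dist_eq_one_iff_adj.2 (oneJoin_adj_none_some w)).le

lemma oneJoin_connected (H : SimpleGraph W) : (oneJoin H).Connected := by
  have hnone : ∀ a : Option W, (oneJoin H).Reachable none a := by
    rintro (_ | w)
    · rfl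
    · exact (oneJoin_adj_none_some w).reachable
  exact (connected_iff _).2 ⟨fun a b => (hnone a).symm.trans (hnone b), ⟨none⟩⟩

lemma oneJoin_dist_le_two (a b : Option W) : (oneJoin H).dist a b ≤ 2 :=
  calc (oneJoin H).dist a b ≤ (oneJoin H).dist a none + (oneJoin H).dist none b :=
        (oneJoin_connected H).dist_triangle
    _ ≤ 1 + 1 := by
        rw [dist_comm]
        exact add_le_add (oneJoin_dist_none_le_one a) (oneJoin_dist_none_le_one b)

@[simp] lemma corona_adj_inl_inl {u v : V} : (corona G H).Adj (inl u) (inl v) ↔ G.Adj u v := by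
  simp only [corona, fromRel_adj, ne_eq, inl.injEq, G.adj_comm v u, or_self,
    and_iff_right_iff_imp]
  exact Adj.ne

@[simp] lemma corona_adj_inl_inr {u : V} {p : V × W} :
    (corona G H).Adj (inl u) (inr p) ↔ u = p.1 := by
  simp [corona]

@[simp] lemma corona_adj_inr_inl {u : V} {p : V × W} :
    (corona G H).Adj (inr p) (inl u) ↔ p.1 = u := by
  simp [corona, eq_comm]

@[simp] lemma corona_adj_inr_inr {p q : V × W} :
    (corona G H).Adj (inr p) (inr q) ↔ p.1 = q.1 ∧ H.Adj p.2 q.2 := by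
  simp only [corona, fromRel_adj, ne_eq, inr.injEq, eq_comm (a := q.1), H.adj_comm q.2, or_self,
    and_iff_right_iff_imp]
  rintro ⟨-, h⟩ rfl
  exact h.ne rfl

variable (G H) in
def coronaCopy (u : V) : oneJoin H ↪g corona G H where
  toFun a := a.elim (inl u) fun w => inr (u, w)
  inj' := by rintro (_ | a) (_ | b) h <;> simp_all
  map_rel_iff' {a b} := by rcases a with _ | a <;> rcases b with _ | b <;> simp [DFunLike.coe]

@[simp] lemma coronaCopy_none (u : V) : coronaCopy G H u none = inl u := rfl

@[simp] lemma coronaCopy_some (u : V) (w : W) : coronaCopy G H u (some w) = inr (u, w) := rfl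

lemma coronaCopy_injective2 : Function.Injective2 fun u => ⇑(coronaCopy G H u) := by
  rintro u v (_ | a) (_ | b) h <;> simp_all

lemma dist_coronaCopy (u : V) (a b : Option W) :
    (corona G H).dist (coronaCopy G H u a) (coronaCopy G H u b) = (oneJoin H).dist a b :=
  (coronaCopy G H u).dist_eq_of_dist_le_two (oneJoin_connected H a b) (oneJoin_dist_le_two a b)

lemma corona_connected (hG : G.Connected) : (corona G H).Connected := by
  have hbase : ∀ u : V, ∀ a, (corona G H).Reachable (inl u) (coronaCopy G H u a) := fun u a =>
    (oneJoin_connected H none a).map (coronaCopy G H u).toHom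
  have hinl : ∀ u v : V, (corona G H).Reachable (inl u) (inl v) := fun u v =>
    (hG u v).map ⟨inl, corona_adj_inl_inl.2⟩
  have hcover : ∀ x, ∃ u a, x = coronaCopy G H u a := by
    rintro (u | ⟨u, w⟩)
    exacts [⟨u, none, rfl⟩, ⟨u, some w, rfl⟩]
  refine (connected_iff _).2 ⟨fun x y => ?_, hG.nonempty.map inl⟩
  obtain ⟨u, a, rfl⟩ := hcover x
  obtain ⟨v, b, rfl⟩ := hcover y
  exact (hbase u a).symm.trans ((hinl u v).trans (hbase v b))

/-- `inl u` is a cut vertex separating its copy of `H` from the rest of `G ⊙ H`. -/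
lemma dist_inl_add_one_le_length {u : V} {y : V ⊕ V × W}
    (hy : y ∉ Set.range (coronaCopy G H u)) {x : V ⊕ V × W} (p : (corona G H).Walk x y)
    (w : W) (hx : x = inr (u, w)) : (corona G H).dist (inl u) y + 1 ≤ p.length := by
  induction p generalizing w with
  | nil => exact absurd ⟨some w, hx.symm⟩ hy
  | @cons x z y hxz q ih =>
    subst hx
    rw [Walk.length_cons]
    rcases z with v | ⟨v, w'⟩
    · obtain rfl : u = v := by simpa using hxz
      exact Nat.add_le_add_right (dist_le q) 1
    · obtain ⟨rfl, -⟩ : u = v ∧ H.Adj w w' := by simpa using hxz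
      exact (ih hy w' rfl).trans (Nat.le_succ _)

lemma dist_inr_eq_dist_inl_add_one (hG : G.Connected) {u : V} {y : V ⊕ V × W}
    (hy : y ∉ Set.range (coronaCopy G H u)) (w : W) :
    (corona G H).dist (inr (u, w)) y = (corona G H).dist (inl u) y + 1 := by
  refine le_antisymm ?_ ?_
  · calc (corona G H).dist (inr (u, w)) y
          ≤ (corona G H).dist (inr (u, w)) (inl u) + (corona G H).dist (inl u) y :=
          (corona_connected hG).dist_triangle
      _ = (corona G H).dist (inl u) y + 1 := by
          rw [dist_eq_one_iff_adj.2 (corona_adj_inr_inl.2 rfl), add_comm]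
  · obtain ⟨p, hp⟩ := (corona_connected hG).exists_walk_length_eq_dist (inr (u, w)) y
    exact hp ▸ dist_inl_add_one_le_length hy p w rfl

lemma isLocalMetricGenerator_corona (hG : G.Connected) {B : Set (Option W)}
    (hB : IsLocalMetricGenerator (oneJoin H) B) (hBne : B.Nonempty) (hnone : none ∉ B) :
    IsLocalMetricGenerator (corona G H) (Set.image2 (fun u => coronaCopy G H u) Set.univ B) := by
  have hcopy : ∀ u a b, (oneJoin H).Adj a b →
      ∃ s ∈ Set.image2 (fun u => coronaCopy G H u) Set.univ B,
        (corona G H).dist (coronaCopy G H u a) s ≠ (corona G H).dist (coronaCopy G H u b) s := by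
    intro u a b hab
    obtain ⟨c, hc, hne⟩ := hB hab
    exact ⟨coronaCopy G H u c, Set.mem_image2_of_mem trivial hc, by
      rwa [dist_coronaCopy, dist_coronaCopy]⟩
  rintro (u | ⟨u, w⟩) (v | ⟨v, w'⟩) hxy
  · obtain ⟨_ | w, hw⟩ := hBne
    · exact absurd hw hnone
    have huv : G.Adj u v := by simpa using hxy
    have hv : inl v ∉ Set.range (coronaCopy G H u) := by
      rintro ⟨_ | a, ha⟩
      · exact huv.ne (by simpa using ha)
      · simp at ha
    refine ⟨inr (u, w), Set.mem_image2_of_mem (Set.mem_univ u) hw, ?_⟩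
    rw [dist_comm (u := inl v), dist_inr_eq_dist_inl_add_one hG hv,
      dist_eq_one_iff_adj.2 ((corona_adj_inl_inr (p := (u, w))).2 rfl)]
    have : (corona G H).dist (inl u) (inl v) ≠ 0 :=
      (corona_connected hG).pos_dist_of_ne (by simpa using huv.ne) |>.ne'
    omega
  · obtain rfl : u = v := by simpa using hxy
    exact hcopy u none (some w') (oneJoin_adj_none_some w')
  · obtain rfl : u = v := by simpa using hxy
    exact hcopy u (some w) none (oneJoin_adj_some_none w)
  · obtain ⟨rfl, huv⟩ : u = v ∧ H.Adj w w' := by simpa using hxy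
    exact hcopy u (some w) (some w') (oneJoin_adj_some_some.2 huv)

lemma IsLocalMetricGenerator.oneJoin_of_corona (hG : G.Connected) {S : Set (V ⊕ V × W)}
    (hS : IsLocalMetricGenerator (corona G H) S) (u : V) :
    IsLocalMetricGenerator (oneJoin H) (insert none (coronaCopy G H u ⁻¹' S)) := by
  rintro (_ | w) b hab
  · exact ⟨none, Set.mem_insert _ _, hab.dist_self_ne⟩
  rcases b with _ | w'
  · exact ⟨none, Set.mem_insert _ _, hab.symm.dist_self_ne.symm⟩
  obtain ⟨s, hs, hne⟩ := hS (corona_adj_inr_inr.2 ⟨rfl, oneJoin_adj_some_some.1 hab⟩ :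
    (corona G H).Adj (inr (u, w)) (inr (u, w')))
  by_cases hsu : s ∈ Set.range (coronaCopy G H u)
  · obtain ⟨c, rfl⟩ := hsu
    refine ⟨c, Set.mem_insert_of_mem _ hs, ?_⟩
    rwa [← dist_coronaCopy u, ← dist_coronaCopy u]
  · rw [dist_inr_eq_dist_inl_add_one hG hsu, dist_inr_eq_dist_inl_add_one hG hsu] at hne
    exact (hne rfl).elim

section Counting

variable [Fintype V] [Fintype W]

lemma localMetricDim_corona_le (hG : G.Connected) {B : Finset (Option W)}
    (hB : IsLocalMetricGenerator (oneJoin H) ↑B) (hBne : B.Nonempty) (hnone : none ∉ B) :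
    localMetricDim (corona G H) ≤ Fintype.card V * B.card := by
  classical
  calc localMetricDim (corona G H)
      ≤ (Finset.image₂ (fun u => coronaCopy G H u) Finset.univ B).card := by
        refine localMetricDim_le_card ?_
        rw [Finset.coe_image₂, Finset.coe_univ]
        exact isLocalMetricGenerator_corona hG hB hBne hnone
    _ = Fintype.card V * B.card := by
        rw [Finset.card_image₂ coronaCopy_injective2, Finset.card_univ]

lemma card_mul_localMetricDim_le (hG : G.Connected)
    (hv : ∀ B : Finset (Option W), IsLocalMetricBasis (oneJoin H) B → none ∉ B) :
    Fintype.card V * localMetricDim (oneJoin H) ≤ localMetricDim (corona G H) := by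
  classical
  refine le_localMetricDim fun S hS => ?_
  let restrict (u : V) : Finset (Option W) :=
    S.preimage (coronaCopy G H u) (coronaCopy_injective2.right u).injOn
  have hrestrict (u : V) : localMetricDim (oneJoin H) ≤ (restrict u).card := by
    have hgen : IsLocalMetricGenerator (oneJoin H) ↑(insert none (restrict u)) := by
      rw [Finset.coe_insert, Finset.coe_preimage]
      exact hS.oneJoin_of_corona hG u
    have := hgen.localMetricDim_lt_card (Finset.mem_insert_self _ _) hv
    have := Finset.card_insert_le none (restrict u)
    omega
  calc Fintype.card V * localMetricDim (oneJoin H)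
      = ∑ _u : V, localMetricDim (oneJoin H) := by simp
    _ ≤ ∑ u, (restrict u).card := Finset.sum_le_sum fun u _ => hrestrict u
    _ ≤ S.card := Finset.sum_card_preimage_le_card coronaCopy_injective2 S

end Counting

end CoronaProduct

/-- If the vertex of K₁ belongs to no local metric basis of K₁ + H (H a
non-empty graph), then dim_l(G ⊙ H) = n · dim_l(K₁ + H) for every connected
graph G of order n. -/
theorem localMetricDim_corona_of_not_mem {V W : Type*} [Fintype V] [Fintype W]
    (G : SimpleGraph V) (H : SimpleGraph W) (hG : G.Connected)
    (hne : H.edgeSet.Nonempty)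
    (hv : ∀ B : Finset (Option W), IsLocalMetricBasis (oneJoin H) B → none ∉ B) :
    localMetricDim (corona G H) = Fintype.card V * localMetricDim (oneJoin H) := by
  obtain ⟨w, -, -⟩ := (ne_bot_iff_exists_adj.1 (edgeSet_nonempty.1 hne))
  obtain ⟨B, hB⟩ := exists_isLocalMetricBasis (oneJoin H)
  obtain ⟨c, hc, -⟩ := hB.1 (oneJoin_adj_none_some w)
  refine le_antisymm ?_ (card_mul_localMetricDim_le hG hv)
  calc localMetricDim (corona G H) ≤ Fintype.card V * B.card :=
        localMetricDim_corona_le hG hB.1 ⟨c, hc⟩ (hv B hB)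
    _ = Fintype.card V * localMetricDim (oneJoin H) := by rw [hB.2]
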